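/- arXiv:2112.09502 — 2 statements merged into one kernel-verified Lean document; each statement's English description precedes it below -/
import Mathlib

section
/- Let $S_1 = k[x_1,\ldots,x_N][[t]]$ over a field $k$ and let $h : S_1 \to S_2 := k[x_1,\ldots,x_N]((t))$ be the localization at $t$. Let $P$ be a prime ideal of $S_2$ and set $Q := P \cap S_1$. If $g \in k[[t]]$ and $h' \in (x_1,\ldots,x_N)S_1$ satisfy $g + h' \in Q$ and $g \neq 0$, and if moreover $Q$ is invariant under all ring automorphisms $T_c$ ($c \in k^\times$) of $S_1$ given by $T_c(t) = c^{-d}t$, $T_c(x_i) = c^{e_i}x_i$ (for fixed integers $d \ge 1$ and $0 < e_i \le d$) with $k$ infinite, then $t^a \in Q$ for some $a \ge 0$, and consequently $P = S_2$, a contradiction; hence no such $g$ exists. Equivalently: if $Q$ is a $T_c$-invariant prime ideal of $S_1$ with $Q S_2 \neq S_2$, then $Q \subseteq (x_1,\ldots,x_N, t^{s+1})$ for every $s \ge 0$, i.e. $Q \subseteq (x_1,\ldots,x_N)$. -/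
/-!
Decompose `f ∈ Q` by the weight `wt(t^n x^m) = Σ eᵢ mᵢ - d n`, for which `T_c` acts on the
weight-`w` part as multiplication by `c^w`. Modulo `t^(a+1)`, `c^(d a) • T_c f` is a polynomial
in `c` with coefficients in `S₁`, and it lies in the subspace `Q + (t^(a+1))` for every `c ≠ 0`;
as `k` is infinite, so does its value at `c = 0`. Since `d` and all `eᵢ` are positive, that value
is the single term `f_{a,0} t^a`, where `f_{a,0} ∈ k` is the constant coefficient of `[t^a] f`.
If `f_{a,0} ≠ 0`, then `t^a` times a unit of `S₁` lies in `Q`, so `t^a ∈ Q` and `Q S₂ = S₂`.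
Hence every coefficient of `f` has zero constant term, i.e. `f ∈ (x₁, …, x_N)`.
-/

/-- The map `T_c` on `S₁ = k[x₁,…,x_N][[t]]` given by `t ↦ c^{-d} t`, `xᵢ ↦ c^{eᵢ} xᵢ`. -/
noncomputable def Tc {k : Type*} [Field k] {N : ℕ} (d : ℕ) (e : Fin N → ℕ) (c : k)
    (f : PowerSeries (MvPolynomial (Fin N) k)) : PowerSeries (MvPolynomial (Fin N) k) :=
  PowerSeries.mk fun n =>
    (c⁻¹ ^ (d * n)) •
      (MvPolynomial.aeval (fun i : Fin N => (c ^ e i) • MvPolynomial.X i)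
        (PowerSeries.coeff n f))

namespace Submodule

variable {k V ι : Type*} [Field k] [Infinite k] [AddCommGroup V] [Module k V]

theorem sum_pow_smul_mem_of_forall_ne_zero (U : Submodule k V) (s : Finset ι) (ν : ι → ℕ)
    (v : ι → V) (h : ∀ c : k, c ≠ 0 → ∑ i ∈ s, c ^ ν i • v i ∈ U) (c : k) :
    ∑ i ∈ s, c ^ ν i • v i ∈ U := by
  rw [← Quotient.mk_eq_zero, ← Module.forall_dual_apply_eq_zero_iff k]
  intro φ
  let p : Polynomial k := ∑ i ∈ s, Polynomial.C (φ (U.mkQ (v i))) * Polynomial.X ^ ν i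
  have hp (c : k) : p.eval c = φ (U.mkQ (∑ i ∈ s, c ^ ν i • v i)) := by
    simp only [p, Polynomial.eval_finsetSum, Polynomial.eval_mul, Polynomial.eval_C,
      Polynomial.eval_pow, Polynomial.eval_X, map_sum, map_smul, smul_eq_mul, mul_comm]
  have hp0 : p = 0 := Polynomial.eq_zero_of_infinite_isRoot p <|
    (Set.finite_singleton 0).infinite_compl.mono fun c hc => by
      rw [Set.mem_ofPred_eq, Polynomial.IsRoot, hp, U.mkQ_apply,
        (Quotient.mk_eq_zero U).mpr (h c hc), map_zero]
  rw [← U.mkQ_apply, ← hp, hp0, Polynomial.eval_zero]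

end Submodule

namespace MvPolynomial

theorem mem_span_range_X_of_coeff_zero {R σ : Type*} [CommSemiring R] {p : MvPolynomial σ R}
    (h : coeff 0 p = 0) : p ∈ Ideal.span (Set.range X) := by
  rw [← Set.image_univ, mem_ideal_span_X_image]
  intro m hm
  obtain ⟨i, hi⟩ := Finsupp.ne_iff.mp (ne_of_mem_of_not_mem hm (by simpa using h))
  exact ⟨i, Set.mem_univ i, hi⟩

variable {k σ : Type*} [Field k]

theorem aeval_pow_smul_X_monomial (e : σ → ℕ) (c : k) (s : σ →₀ ℕ) (a : k) :
    aeval (fun i => c ^ e i • X i) (monomial s a) = c ^ Finsupp.weight e s • monomial s a := by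
  simp only [aeval_monomial, smul_pow, Finsupp.prod, Finset.prod_smul, ← pow_mul,
    Finset.prod_pow_eq_pow_sum, Finsupp.weight_apply, Finsupp.sum, smul_eq_mul, mul_comm (s _)]
  rw [monomial_eq, Finsupp.prod, smul_eq_C_mul, smul_eq_C_mul, algebraMap_eq]
  ring

theorem coeff_aeval_pow_smul_X (e : σ → ℕ) (c : k) (p : MvPolynomial σ k) (m : σ →₀ ℕ) :
    coeff m (aeval (fun i => c ^ e i • X i) p) = c ^ Finsupp.weight e m * coeff m p := by
  induction p using MvPolynomial.induction_on' with
  | monomial s a =>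
    classical
    rw [aeval_pow_smul_X_monomial, coeff_smul, coeff_monomial, smul_eq_mul]
    split_ifs with h
    · rw [h]
    · simp
  | add p q hp hq => simp only [map_add, coeff_add, hp, hq, mul_add]

end MvPolynomial

namespace PowerSeries

theorem X_pow_mem_of_monomial_mem_sup {R : Type*} [CommRing R] {I : Ideal R⟦X⟧} {a : ℕ} {r : R}
    (hr : IsUnit r) (h : monomial a r ∈ I ⊔ Ideal.span {X ^ (a + 1)}) : X ^ a ∈ I := by
  obtain ⟨q, hq, y, hy, hqy⟩ := Submodule.mem_sup.mp h
  obtain ⟨g, rfl⟩ := Ideal.mem_span_singleton'.mp hy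
  have hu : IsUnit (C r - g * X) := by
    simpa [isUnit_iff_constantCoeff] using hr
  rw [← Ideal.mul_unit_mem_iff_mem I hu]
  convert hq using 1
  rw [eq_sub_of_add_eq hqy, monomial_eq_C_mul_X_pow]
  ring

theorem mem_span_range_C_of_forall_coeff_mem {R ι : Type*} [CommRing R] [Fintype ι] (x : ι → R)
    (f : R⟦X⟧) (h : ∀ n, coeff n f ∈ Ideal.span (Set.range x)) :
    f ∈ Ideal.span (Set.range fun i => C (x i)) := by
  choose b hb using fun n => (Submodule.mem_span_range_iff_exists_fun R).mp (h n)
  have hf : f = ∑ i, mk (fun n => b n i) * C (x i) := by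
    ext n
    simp [map_sum, coeff_mul_C, ← hb n]
  rw [hf]
  exact Ideal.sum_mem _ fun i _ => Ideal.mul_mem_left _ _ (Ideal.subset_span ⟨i, rfl⟩)

end PowerSeries

namespace Tc

open PowerSeries

variable {k : Type*} [Field k] {N : ℕ} (d : ℕ) (e : Fin N → ℕ)

theorem coeff_coeff (c : k) (f : (MvPolynomial (Fin N) k)⟦X⟧) (n : ℕ) (m : Fin N →₀ ℕ) :
    (coeff n (Tc d e c f)).coeff m =
      c⁻¹ ^ (d * n) * c ^ Finsupp.weight e m * (coeff n f).coeff m := by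
  rw [Tc, coeff_mk, MvPolynomial.coeff_smul, MvPolynomial.coeff_aeval_pow_smul_X, smul_eq_mul,
    mul_assoc]

/-- The exponent `d * (a - n) + weight e m` is `d * a` plus the weight of `t^n x^m`; the truncated
subtraction is harmless since only `n ≤ a` occurs. -/
theorem X_pow_succ_dvd_pow_smul_sub_sum {c : k} (hc : c ≠ 0) (f : (MvPolynomial (Fin N) k)⟦X⟧)
    (a : ℕ) (T : Finset (Fin N →₀ ℕ)) (hT : ∀ n ≤ a, (coeff n f).support ⊆ T) :
    X ^ (a + 1) ∣ c ^ (d * a) • Tc d e c f - ∑ x ∈ Finset.range (a + 1) ×ˢ T,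
      c ^ (d * (a - x.1) + Finsupp.weight e x.2) •
        monomial x.1 (MvPolynomial.monomial x.2 ((coeff x.1 f).coeff x.2)) := by
  classical
  rw [X_pow_dvd_iff]
  intro n hn
  have hpow : c ^ (d * a) * c⁻¹ ^ (d * n) = c ^ (d * (a - n)) := by
    rw [inv_pow, ← Nat.sub_add_cancel (Nat.le_of_lt_succ hn), mul_add, pow_add,
      mul_inv_cancel_right₀ (pow_ne_zero _ hc), Nat.add_sub_cancel]
  rw [map_sub, sub_eq_zero, Finset.sum_product, map_sum, Finset.sum_eq_single_of_mem n
    (Finset.mem_range.mpr hn) fun n' _ hn' => by simp [coeff_monomial, Ne.symm hn']]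
  ext m
  simp only [map_sum, coeff_monomial, coeff_smul, MvPolynomial.coeff_smul, if_pos,
    coeff_coeff, MvPolynomial.coeff_sum, MvPolynomial.coeff_monomial, smul_eq_mul]
  simp only [mul_ite, mul_zero, Finset.sum_ite_eq', ← mul_assoc, pow_add]
  split_ifs with hm
  · rw [hpow]
  · rw [MvPolynomial.notMem_support_iff.mp fun h => hm (hT n (by omega) h), mul_zero]

theorem monomial_C_coeff_zero_mem_sup [Infinite k] (hd : d ≠ 0) (he : ∀ i, e i ≠ 0)
    {I : Ideal (MvPolynomial (Fin N) k)⟦X⟧} (hinv : ∀ c : k, c ≠ 0 → ∀ f ∈ I, Tc d e c f ∈ I)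
    {f : (MvPolynomial (Fin N) k)⟦X⟧} (hf : f ∈ I) (a : ℕ) :
    monomial a (MvPolynomial.C ((coeff a f).coeff 0)) ∈ I ⊔ Ideal.span {X ^ (a + 1)} := by
  classical
  set T := (Finset.range (a + 1)).biUnion fun n => (coeff n f).support
  have hT : ∀ n ≤ a, (coeff n f).support ⊆ T := fun n hn =>
    Finset.subset_biUnion_of_mem (fun n => (coeff n f).support)
      (Finset.mem_range.mpr (Nat.lt_succ_of_le hn))
  -- `c ^ (d * a) • Tc d e c f` modulo `X ^ (a + 1)`, as a polynomial in `c`, evaluated at `c = 0`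
  have hpoly := Submodule.sum_pow_smul_mem_of_forall_ne_zero
    ((I ⊔ Ideal.span {X ^ (a + 1)}).restrictScalars k) (Finset.range (a + 1) ×ˢ T)
    (fun x => d * (a - x.1) + Finsupp.weight e x.2)
    (fun x => monomial x.1 (MvPolynomial.monomial x.2 ((coeff x.1 f).coeff x.2)))
    (fun c hc => by
      obtain ⟨g, hg⟩ := X_pow_succ_dvd_pow_smul_sub_sum d e hc f a T hT
      rw [Submodule.restrictScalars_mem, eq_sub_of_add_eq' (sub_eq_iff_eq_add.mp hg).symm]
      exact sub_mem (Submodule.smul_of_tower_mem _ _ (Ideal.mem_sup_left (hinv c hc f hf)))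
        (Ideal.mem_sup_right (Ideal.mul_mem_right _ _ (Ideal.mem_span_singleton_self _))))
    0
  have := Finsupp.nonTorsionWeight_of ℕ (w := e) he
  rw [Submodule.restrictScalars_mem, Finset.sum_eq_single (a, 0)] at hpoly
  · simpa [MvPolynomial.monomial_zero', ← MvPolynomial.C_apply] using hpoly
  · rintro ⟨n, m⟩ hx hne
    rw [zero_pow, zero_smul]
    have hn : n ≤ a := Nat.le_of_lt_succ (Finset.mem_range.mp (Finset.mem_product.mp hx).1)
    simp only [ne_eq, Nat.add_eq_zero_iff, mul_eq_zero, hd, false_or,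
      Finsupp.weight_eq_zero_iff_eq_zero]
    rintro ⟨hna, rfl⟩
    exact hne (Prod.ext (show n = a by omega) rfl)
  · intro ha
    have h0 : (coeff a f).coeff 0 = 0 := by
      by_contra h0
      exact ha (Finset.mem_product.mpr ⟨Finset.self_mem_range_succ a,
        hT a le_rfl (MvPolynomial.mem_support_iff.mpr h0)⟩)
    simp [h0]

end Tc

theorem invariant_prime_le_span_X_general
    {k : Type*} [Field k] [CharZero k] {N : ℕ}
    (d : ℕ) (hd : 1 ≤ d) (e : Fin N → ℕ) (he : ∀ i, 0 < e i ∧ e i ≤ d)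
    (Q : Ideal (PowerSeries (MvPolynomial (Fin N) k)))
    (hinv : ∀ c : k, c ≠ 0 → ∀ f ∈ Q, Tc d e c f ∈ Q)
    (hQ : Ideal.map
        (algebraMap (PowerSeries (MvPolynomial (Fin N) k))
          (Localization.Away (PowerSeries.X : PowerSeries (MvPolynomial (Fin N) k)))) Q ≠ ⊤) :
    Q ≤ Ideal.span (Set.range fun i : Fin N =>
      PowerSeries.C (R := MvPolynomial (Fin N) k) (MvPolynomial.X i)) := by
  intro f hf
  refine PowerSeries.mem_span_range_C_of_forall_coeff_mem _ f fun a =>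
    MvPolynomial.mem_span_range_X_of_coeff_zero ?_
  by_contra h0
  have hXa : PowerSeries.X ^ a ∈ Q :=
    PowerSeries.X_pow_mem_of_monomial_mem_sup ((isUnit_iff_ne_zero.mpr h0).map MvPolynomial.C)
      (Tc.monomial_C_coeff_zero_mem_sup d e (by omega) (fun i => (he i).1.ne') hinv hf a)
  exact Set.disjoint_left.mp ((IsLocalization.map_algebraMap_ne_top_iff_disjoint
    (Submonoid.powers _) _ Q).mp hQ) ⟨a, rfl⟩ hXa

/-- Let `S₁ = k[x₁,…,x_N][[t]]` and `S₂` its localization at `t`.  If `Q`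
is a prime ideal of `S₁` invariant under all the automorphisms `T_c` (`c ∈ kˣ`) and
`Q S₂ ≠ S₂`, then `Q ⊆ (x₁,…,x_N)`. -/
theorem invariant_prime_le_span_X
    {k : Type*} [Field k] [IsAlgClosed k] [CharZero k] {N : ℕ}
    (d : ℕ) (hd : 1 ≤ d) (e : Fin N → ℕ) (he : ∀ i, 0 < e i ∧ e i ≤ d)
    (Q : Ideal (PowerSeries (MvPolynomial (Fin N) k))) [Q.IsPrime]
    (hinv : ∀ c : k, c ≠ 0 → ∀ f ∈ Q, Tc d e c f ∈ Q)
    (hQ : Ideal.map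
        (algebraMap (PowerSeries (MvPolynomial (Fin N) k))
          (Localization.Away (PowerSeries.X : PowerSeries (MvPolynomial (Fin N) k)))) Q ≠ ⊤) :
    Q ≤ Ideal.span (Set.range fun i : Fin N =>
      PowerSeries.C (R := MvPolynomial (Fin N) k) (MvPolynomial.X i)) :=
  invariant_prime_le_span_X_general d hd e he Q hinv hQ
end

section
/- Let $R$ be a commutative ring and let $I$ be an ideal of $R$ with minimal primes $P_1,\ldots,P_m$. Suppose a group $H$ acts on $R$ by ring automorphisms preserving $I$, and suppose $H$ is divisible in the sense that every element of $H$ is an $m!$-th power. Then each $P_i$ is invariant under the action of $H$. -/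
/-!
The action of `H` permutes the finitely many minimal primes of `I`, so it factors through the
symmetric group on them, of order `m!`. Hence every `m!`-th power, and so every element of `H`,
fixes each minimal prime.
-/

open Pointwise Nat

theorem MulAction.pow_factorial_card_smul {G α : Type*} [Group G] [MulAction G α] [Finite α]
    (g : G) (a : α) : g ^ (Nat.card α)! • a = a := by
  have h : MulAction.toPermHom G α g ^ (Nat.card α)! = 1 := by
    rw [← Nat.card_perm]
    exact pow_card_eq_one'
  rw [← map_pow] at h
  exact congr($h a)

theorem Set.Finite.pow_factorial_ncard_smul {G α : Type*} [Group G] [MulAction G α] {s : Set α}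
    (hs : s.Finite) (hinv : ∀ g : G, ∀ a ∈ s, g • a ∈ s) (g : G) {a : α} (ha : a ∈ s) :
    g ^ s.ncard ! • a = a := by
  let S : SubMulAction G α := ⟨s, fun g _ ha => hinv g _ ha⟩
  have : Finite S := hs
  exact congr_arg Subtype.val (MulAction.pow_factorial_card_smul g (⟨a, ha⟩ : S))

namespace Ideal

variable {M R : Type*} [Group M]

theorem pointwise_smul_eq_self_of_forall_smul_mem [Semiring R] [MulSemiringAction M R]
    {I : Ideal R} (hI : ∀ σ : M, ∀ x ∈ I, σ • x ∈ I) (σ : M) : σ • I = I :=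
  le_antisymm
    (pointwise_smul_subset_iff.mpr fun x hx => mem_inv_pointwise_smul_iff.mpr (hI σ x hx))
    (fun x hx => mem_pointwise_smul_iff_inv_smul_mem.mpr (hI σ⁻¹ x hx))

theorem pointwise_smul_mem_minimalPrimes [CommRing R] [MulSemiringAction M R] {I P : Ideal R}
    (hP : P ∈ I.minimalPrimes) (σ : M) :
    σ • P ∈ (σ • I).minimalPrimes := by
  simp only [pointwise_smul_eq_comap]
  exact minimalPrimes_comap_of_surjective
    (f := ((MulSemiringAction.toRingAut M R σ).symm : R →+* R)) (RingEquiv.surjective _) hP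

end Ideal

/-- Let `I` be an ideal of a Noetherian commutative ring `R` with `m`
minimal primes, and let a group `H` act on `R` by ring automorphisms preserving `I`.  If
every element of `H` is an `m!`-th power, then each minimal prime of `I` is `H`-invariant. -/
theorem minimalPrimes_invariant_of_divisible_group_action
    {R : Type*} [CommRing R] [IsNoetherianRing R]
    {H : Type*} [Group H] [MulSemiringAction H R]
    (I : Ideal R) (hI : ∀ (σ : H), ∀ x ∈ I, σ • x ∈ I)
    (m : ℕ) (hm : I.minimalPrimes.ncard = m)
    (hdiv : ∀ σ : H, ∃ τ : H, τ ^ (Nat.factorial m) = σ) :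
    ∀ P ∈ I.minimalPrimes, ∀ (σ : H), ∀ x ∈ P, σ • x ∈ P := by
  intro P hP σ x hx
  have hpermute : ∀ τ : H, ∀ Q ∈ I.minimalPrimes, τ • Q ∈ I.minimalPrimes :=
    fun τ Q hQ =>
      Ideal.pointwise_smul_eq_self_of_forall_smul_mem hI τ ▸
        Ideal.pointwise_smul_mem_minimalPrimes hQ τ
  obtain ⟨τ, rfl⟩ := hdiv σ
  have hfix : τ ^ m ! • P = P := hm ▸
    (Ideal.finite_minimalPrimes_of_isNoetherianRing R I).pow_factorial_ncard_smul hpermute τ hP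
  rw [← hfix]
  exact Ideal.smul_mem_pointwise_smul _ _ _ hx
end
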